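/- arXiv:2408.16064 — 4 statements merged into one kernel-verified Lean document; each statement's English description precedes it below -/
import Mathlib

section
/- Let G be a finite nilpotent group and let H₁, H₂ be proper subgroups of G. Then G is not the union of the conjugates of H₁ together with the conjugates of H₂. -/
/-- A finite nilpotent group is never the union of the conjugates of two proper
subgroups. -/
theorem nilpotent_not_union_two_conjugates (G : Type*) [Group G] [Finite G]
    [Group.IsNilpotent G] (H₁ H₂ : Subgroup G) (h₁ : H₁ ≠ ⊤) (h₂ : H₂ ≠ ⊤) :
    ((⋃ g : G, (fun x => g * x * g⁻¹) '' (H₁ : Set G)) ∪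
      ⋃ g : G, (fun x => g * x * g⁻¹) '' (H₂ : Set G)) ≠ Set.univ := by
  obtain ⟨M₁, hM₁, hle₁⟩ := (eq_top_or_exists_le_coatom H₁).resolve_left h₁
  obtain ⟨M₂, hM₂, hle₂⟩ := (eq_top_or_exists_le_coatom H₂).resolve_left h₂
  have hn₁ : M₁.Normal :=
    Subgroup.NormalizerCondition.normal_of_coatom M₁ normalizerCondition_of_isNilpotent hM₁
  have hn₂ : M₂.Normal :=
    Subgroup.NormalizerCondition.normal_of_coatom M₂ normalizerCondition_of_isNilpotent hM₂
  -- conjugates of Hᵢ lie in Mᵢ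
  have key : ∀ (H M : Subgroup G), H ≤ M → M.Normal →
      (⋃ g : G, (fun x => g * x * g⁻¹) '' (H : Set G)) ⊆ (M : Set G) := by
    intro H M hle hn x hx
    obtain ⟨g, y, hy, rfl⟩ := by simpa using hx
    exact hn.conj_mem y (hle hy) g
  intro hcover
  -- get a ∉ M₁, b ∉ M₂
  obtain ⟨a, ha⟩ : ∃ a, a ∉ M₁ := by
    by_contra h
    push_neg at h
    exact hM₁.1 ((Subgroup.eq_top_iff' M₁).mpr h)
  obtain ⟨b, hb⟩ : ∃ b, b ∉ M₂ := by
    by_contra h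
    push_neg at h
    exact hM₂.1 ((Subgroup.eq_top_iff' M₂).mpr h)
  have sub : (Set.univ : Set G) ⊆ (M₁ : Set G) ∪ (M₂ : Set G) := by
    rw [← hcover]
    exact Set.union_subset_union (key H₁ M₁ hle₁ hn₁) (key H₂ M₂ hle₂ hn₂)
  have ha' : a ∈ M₂ := (sub (Set.mem_univ a)).resolve_left ha
  have hb' : b ∈ M₁ := (sub (Set.mem_univ b)).resolve_right hb
  rcases sub (Set.mem_univ (a * b)) with h | h
  · exact ha (by simpa using M₁.mul_mem h (M₁.inv_mem hb'))
  · exact hb (by simpa [mul_assoc] using M₂.mul_mem (M₂.inv_mem ha') h)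
end

section
/- Let p be a prime, q = p^f, V = F_q^n, and let g ∈ GL_n(q) be an element whose order divides q^e − 1 and is coprime to q^i − 1 for all 1 ≤ i < e. Then dim C_V(g) ≡ dim V (mod e), where C_V(g) is the fixed subspace (1-eigenspace) of g. -/
/-!
Let `k` be an exponent of `g` and `r` a prime factor of `k`, and put `h = g ^ (k / r)`.
Since `h ^ r = 1`, counting the fixed points of `h` on the finite set `V` gives
`q ^ dim V ≡ q ^ dim C_V(h) (mod r)`. The hypotheses on `k` say that `q` has multiplicative
order exactly `e` modulo `r`, so `dim C_V(h) ≡ dim V (mod e)`. Finally `C_V(g) ⊆ C_V(h)`, and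
`g` acts on `C_V(h)` with exponent `k / r`, so induction on `k` finishes the proof.
-/

open Module LinearMap

theorem orderOf_natCast_zmod_eq {r q e : ℕ} (hr : r ≠ 1) (hq : 0 < q) (he : 0 < e)
    (hdvd : r ∣ q ^ e - 1) (hcop : ∀ i, 1 ≤ i → i < e → Nat.Coprime r (q ^ i - 1)) :
    orderOf (q : ZMod r) = e := by
  have pow_eq_one_iff (i : ℕ) : (q : ZMod r) ^ i = 1 ↔ r ∣ q ^ i - 1 := by
    rw [← Nat.cast_pow, ← Nat.cast_one, ZMod.natCast_eq_natCast_iff, Nat.ModEq.comm,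
      Nat.modEq_iff_dvd' (Nat.one_le_pow _ _ hq)]
  refine (orderOf_eq_iff he).2 ⟨(pow_eq_one_iff e).2 hdvd, fun i hie hi h => hr ?_⟩
  exact (hcop i hi hie).eq_one_of_dvd ((pow_eq_one_iff i).1 h)

theorem finrank_ker_restrict_sub_one {R M : Type*} [Ring R] [AddCommGroup M] [Module R M]
    {a : Module.End R M} {p : Submodule R M} (hp : ∀ x ∈ p, a x ∈ p) (hle : ker (a - 1) ≤ p) :
    finrank R (ker (a.restrict hp - 1)) = finrank R (ker (a - 1)) := by
  have hker : ker (a.restrict hp - 1) = (ker (a - 1)).comap p.subtype := by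
    ext x
    simp [sub_eq_zero, Subtype.ext_iff]
  rw [hker]
  exact (Submodule.comapSubtypeEquivOfLe hle).finrank_eq

section FiniteField

variable {F V : Type*} [Field F] [Fintype F] [AddCommGroup V] [Module F V] [FiniteDimensional F V]

theorem card_pow_finrank_modEq_of_pow_eq_one {r : ℕ} [Fact r.Prime] (b : Module.End F V)
    (hb : b ^ r = 1) :
    Fintype.card F ^ finrank F V ≡ Fintype.card F ^ finrank F (ker (b - 1)) [MOD r] := by
  classical
  have : Finite V := Module.finite_of_finite F
  have : Fintype V := Fintype.ofFinite V
  have hb' : (MulAction.toEndHom b : Function.End V) ^ r ^ 1 = 1 := by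
    rw [pow_one, ← map_pow, hb, map_one]
  have hfix : Function.fixedPoints (MulAction.toEndHom b : Function.End V) = ker (b - 1) := by
    ext v
    simp only [SetLike.mem_coe, mem_ker, LinearMap.sub_apply, Module.End.one_apply, sub_eq_zero]
    exact Iff.rfl
  have hcard := Equiv.Perm.card_fixedPoints_modEq hb'
  simp only [Fintype.card_eq_nat_card, hfix, SetLike.coe_sort_coe] at hcard ⊢
  rwa [← Module.natCard_eq_pow_finrank, ← Module.natCard_eq_pow_finrank]

theorem finrank_ker_sub_one_modEq_of_pow_eq_one {e k : ℕ} (he : 0 < e)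
    (hk : k ∣ Fintype.card F ^ e - 1)
    (hcop : ∀ i, 1 ≤ i → i < e → Nat.Coprime k (Fintype.card F ^ i - 1))
    (a : Module.End F V) (ha : a ^ k = 1) :
    finrank F (ker (a - 1)) ≡ finrank F V [MOD e] := by
  induction k using Nat.strong_induction_on generalizing V with
  | _ k ih =>
  have hk0 : k ≠ 0 := by
    rintro rfl
    have : 1 < Fintype.card F ^ e := Nat.one_lt_pow he.ne' Fintype.one_lt_card
    omega
  obtain rfl | hk1 := eq_or_ne k 1
  · rw [pow_one] at ha
    rw [ha, sub_self, ker_zero, finrank_top]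
  set r := k.minFac
  have hr : r.Prime := Nat.minFac_prime hk1
  have : Fact r.Prime := ⟨hr⟩
  obtain ⟨m, hkm⟩ : r ∣ k := Nat.minFac_dvd k
  have hm : m < k := by
    rw [hkm] at hk0 ⊢
    exact lt_mul_left (Nat.pos_of_ne_zero (right_ne_zero_of_mul hk0)) hr.one_lt
  have hmk : m ∣ k := Dvd.intro_left r hkm.symm
  have hrk : r ∣ k := Dvd.intro m hkm.symm
  set U := ker (a ^ m - 1)
  have hU : ∀ x ∈ U, a x ∈ U := fun x hx => by
    simp only [U, mem_ker, LinearMap.sub_apply, Module.End.one_apply, sub_eq_zero] at hx ⊢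
    rw [← Module.End.mul_apply, ← pow_succ, pow_succ', Module.End.mul_apply, hx]
  have hkerU : ker (a - 1) ≤ U := fun x hx => by
    rw [mem_ker, LinearMap.sub_apply, Module.End.one_apply, sub_eq_zero] at hx ⊢
    rw [Module.End.pow_apply, Function.iterate_fixed hx]
  have hrestrict : a.restrict hU ^ m = 1 := by
    rw [Module.End.pow_restrict]
    ext x
    exact sub_eq_zero.1 x.2
  have hUV : finrank F U ≡ finrank F V [MOD e] := by
    have horder := orderOf_natCast_zmod_eq hr.ne_one Fintype.card_pos he (hrk.trans hk)
      (fun i hi hie => (hcop i hi hie).coprime_dvd_left hrk)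
    have hcard := card_pow_finrank_modEq_of_pow_eq_one (a ^ m)
      (by rw [← pow_mul, mul_comm, ← hkm, ha])
    rw [← ZMod.natCast_eq_natCast_iff, Nat.cast_pow, Nat.cast_pow,
      (orderOf_pos_iff.1 (horder ▸ he)).pow_eq_pow_iff_modEq, horder] at hcard
    exact hcard.symm
  calc finrank F (ker (a - 1)) = finrank F (ker (a.restrict hU - 1)) :=
        (finrank_ker_restrict_sub_one hU hkerU).symm
    _ ≡ finrank F U [MOD e] :=
        ih m hm (hmk.trans hk) (fun i hi hie => (hcop i hi hie).coprime_dvd_left hmk) _ hrestrict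
    _ ≡ finrank F V [MOD e] := hUV

end FiniteField

theorem fixed_space_dim_mod_general (n e : ℕ) (he : 0 < e)
    (F : Type*) [Field F] [Fintype F]
    (V : Type*) [AddCommGroup V] [Module F V] [FiniteDimensional F V]
    (hn : Module.finrank F V = n)
    (g : V ≃ₗ[F] V)
    (hdvd : orderOf g ∣ Fintype.card F ^ e - 1)
    (hcop : ∀ i : ℕ, 1 ≤ i → i < e → Nat.Coprime (orderOf g) (Fintype.card F ^ i - 1)) :
    Module.finrank F (LinearMap.ker ((g : V →ₗ[F] V) - LinearMap.id)) ≡ n [MOD e] := by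
  have hg : (g : Module.End F V) ^ orderOf g = 1 := by
    rw [← LinearEquiv.automorphismGroup.toLinearMapMonoidHom_apply, ← map_pow,
      pow_orderOf_eq_one, map_one]
  rw [← hn]
  exact finrank_ker_sub_one_modEq_of_pow_eq_one he hdvd hcop _ hg

/-- Let `F` be a finite field with `q = p^f` elements and `V` an `n`-dimensional
`F`-vector space. If `g ∈ GL(V)` has order dividing `q^e - 1` and coprime to
`q^i - 1` for all `1 ≤ i < e`, then `dim C_V(g) ≡ dim V (mod e)`, where `C_V(g)`
is the fixed subspace of `g`. -/
theorem fixed_space_dim_mod (p f n e : ℕ) (hp : p.Prime) (hf : 0 < f) (he : 0 < e)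
    (F : Type*) [Field F] [Fintype F] (hq : Fintype.card F = p ^ f)
    (V : Type*) [AddCommGroup V] [Module F V] [FiniteDimensional F V]
    (hn : Module.finrank F V = n)
    (g : V ≃ₗ[F] V)
    (hdvd : orderOf g ∣ Fintype.card F ^ e - 1)
    (hcop : ∀ i : ℕ, 1 ≤ i → i < e → Nat.Coprime (orderOf g) (Fintype.card F ^ i - 1)) :
    Module.finrank F (LinearMap.ker ((g : V →ₗ[F] V) - LinearMap.id)) ≡ n [MOD e] :=
  fixed_space_dim_mod_general n e he F V hn g hdvd hcop
end

section
/- Let V be a finite vector space over F_p, M ≤ H ≤ GL(V), and G = V ⋊ H. Suppose h ∈ H is contained in no H-conjugate of M, and v ∈ V is not in the image of the linear map h − 1. Then the element (v, h⁻¹) ∈ G is contained in no G-conjugate of H and in no G-conjugate of V ⋊ M. -/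
/-- Let `M ≤ H ≤ GL(V)` for a finite `F_p`-vector space `V`, and let `G = V ⋊ H` be
the affine group, realised inside the full affine group as the preimage of `H` under
the "linear part" homomorphism `π`. Suppose `h ∈ H` lies in no `H`-conjugate of `M`
and `v ∈ V` is not in the image of `h - 1`. Then the affine map `a : x ↦ (x + v)·h⁻¹`
(the element `(v, h⁻¹)` of `G`) lies in no `G`-conjugate of the point stabiliser `H`
(no conjugate `g a g⁻¹` fixes `0` — equivalently fixes any point) and in no
`G`-conjugate of `V ⋊ M` (no conjugate has linear part in `M`). -/
theorem affine_derangement_element (p : ℕ) (hp : p.Prime)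
    (V : Type*) [AddCommGroup V] [Module (ZMod p) V] [Finite V]
    (M H : Subgroup (V ≃ₗ[ZMod p] V)) (hMH : M ≤ H)
    (π : (V ≃ᵃ[ZMod p] V) →* (V ≃ₗ[ZMod p] V))
    (hπ : π = AffineEquiv.linearHom)
    (h : V ≃ₗ[ZMod p] V) (hh : h ∈ H)
    (hder : ∀ x ∈ H, x⁻¹ * h * x ∉ M)
    (v : V) (hv : v ∉ LinearMap.range ((h : V →ₗ[ZMod p] V) - LinearMap.id))
    (a : V ≃ᵃ[ZMod p] V)
    (ha : a = (AffineEquiv.constVAdd (ZMod p) V v).trans (h⁻¹ : V ≃ₗ[ZMod p] V).toAffineEquiv) :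
    ∀ g ∈ Subgroup.comap π H,
      (∀ u : V, (g * a * g⁻¹) u ≠ u) ∧ π (g * a * g⁻¹) ∉ M := by
  intro g hg
  have hπa : π a = h⁻¹ := by rw [hπ]; show a.linear = h⁻¹; rw [ha]; ext x; rfl
  have haw : ∀ w : V, a w = h⁻¹ (w + v) := by
    intro w; simp [ha, map_add, add_comm]
  constructor
  · intro u hu
    apply hv
    have h1 : g (a (g⁻¹ u)) = u := hu
    set w : V := g⁻¹ u with hw
    have haww : a w = w := by
      rw [hw, AffineEquiv.inv_def]
      exact (g.symm_apply_apply _).symm.trans (congrArg g.symm h1)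
    refine ⟨w, ?_⟩
    have h0 : h⁻¹ (w + v) = w := (haw w).symm.trans haww
    have h2 : w + v = h w :=
      (h.apply_symm_apply (w + v)).symm.trans (congrArg h h0)
    simp only [LinearMap.sub_apply, LinearMap.id_coe, id_eq, LinearEquiv.coe_coe]
    rw [← h2]; abel
  · intro hmem
    have hgh : π g ∈ H := hg
    have hkey : π (g * a * g⁻¹) = π g * h⁻¹ * (π g)⁻¹ := by
      rw [map_mul, map_mul, map_inv, hπa]
    rw [hkey] at hmem
    have hinv : (π g * h⁻¹ * (π g)⁻¹)⁻¹ ∈ M := M.inv_mem hmem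
    have hm2 : π g * h * (π g)⁻¹ ∈ M := by
      simpa [mul_assoc] using hinv
    exact hder ((π g)⁻¹) (H.inv_mem hgh) (by simpa using hm2)
end

section
/- Let G ≤ Sym(Ω) be a finite permutation group with exactly two orbits Ω₁ and Ω₂, both of size at least 2. Suppose no prime divisor of |Ω₁| divides |Ω₂| − 1, and suppose the kernel N₁ of the action of G on Ω₁ acts transitively on Ω₂. Then G contains a derangement on Ω, assuming the Fein–Kantor–Schacher theorem that every nontrivial finite transitive permutation group contains a derangement of prime-power order. -/
/-!
Apply the Fein–Kantor–Schacher theorem to the image of `G` in `Sym(Ω₁)` and raise a preimage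
to the `q'`-part of its order: this gives a `q`-element `g` with no fixed point on `Ω₁`, so
`q ∣ |Ω₁|`. If `G` had no derangement, every element of the coset `g N₁` would act on `Ω₁`
as `g` does and hence fix a point of `Ω₂`. Since `N₁` is transitive on `Ω₂`, the elements
of `g N₁` fix on average exactly one point of `Ω₂`, so each of them, `g` included, fixes
exactly one. As `⟨g⟩` is a `q`-group, `|Ω₂| ≡ 1 (mod q)`, contradicting the hypothesis on
the primes dividing `|Ω₁|`.
-/

namespace MulAction

variable {G X : Type*} [Group G] [MulAction G X]

theorem fixedPoints_zpowers (g : G) : fixedPoints (Subgroup.zpowers g) X = fixedBy X g := by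
  ext x
  simp only [mem_fixedPoints, Subtype.forall, Subgroup.forall_mem_zpowers, Subgroup.mk_smul]
  exact mem_fixedBy_zpowers_iff_mem_fixedBy

theorem card_modEq_card_fixedBy {p n : ℕ} [Fact p.Prime] [Finite X] {g : G}
    (hg : orderOf g = p ^ n) : Nat.card X ≡ Nat.card (fixedBy X g) [MOD p] := by
  have hpg : IsPGroup p (Subgroup.zpowers g) := IsPGroup.of_card (by rw [Nat.card_zpowers, hg])
  simpa only [fixedPoints_zpowers] using hpg.card_modEq_card_fixedPoints X

theorem fixedBy_pow_eq_of_coprime {g : G} {m : ℕ}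
    (hm : m.Coprime (orderOf (toPerm g : Equiv.Perm X))) :
    fixedBy X (g ^ m) = fixedBy X g := by
  refine subset_antisymm (fun x hx => ?_) (by simpa using fixedBy_subset_fixedBy_zpow X g m)
  obtain ⟨k, hk⟩ := exists_pow_eq_self_of_coprime hm
  have hx' : x ∈ fixedBy X ((g ^ m) ^ k) := by
    simpa using fixedBy_subset_fixedBy_zpow X (g ^ m) k hx
  have hgk : toPermHom G X ((g ^ m) ^ k) = toPermHom G X g := by
    rw [map_pow, map_pow]; exact hk
  rw [mem_fixedBy, ← toPerm_apply] at hx' ⊢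
  exact (congrArg (· x) hgk).symm.trans hx'

theorem exists_orderOf_eq_prime_pow_fixedBy_eq {q b : ℕ} (hq : q.Prime) {g₀ : G}
    (hg₀ : IsOfFinOrder g₀) (hσ : orderOf (toPerm g₀ : Equiv.Perm X) = q ^ b) :
    ∃ g : G, (∃ c : ℕ, orderOf g = q ^ c) ∧ fixedBy X g = fixedBy X g₀ := by
  set n := orderOf g₀
  refine ⟨g₀ ^ ordCompl[q] n, ?_, fixedBy_pow_eq_of_coprime ?_⟩
  · have : orderOf (g₀ ^ ordCompl[q] n) ∣ q ^ n.factorization q := by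
      refine orderOf_dvd_of_pow_eq_one ?_
      rw [← pow_mul, mul_comm, Nat.ordProj_mul_ordCompl_eq_self, pow_orderOf_eq_one]
    obtain ⟨c, -, hc⟩ := (Nat.dvd_prime_pow hq).1 this
    exact ⟨c, hc⟩
  · rw [hσ]
    exact ((Nat.coprime_ordCompl hq hg₀.orderOf_pos.ne').pow_left b).symm

theorem card_smul_eq_mul_card [IsPretransitive G X] (x y : X) :
    Nat.card {g : G // g • x = y} * Nat.card X = Nat.card G := by
  obtain ⟨g₀, rfl⟩ := exists_smul_eq G x y
  have e : {g : G // g • x = g₀ • x} ≃ stabilizer G x :=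
    (Equiv.mulLeft g₀⁻¹).subtypeEquiv fun g => by
      rw [mem_stabilizer_iff, Equiv.coe_mulLeft, mul_smul, inv_smul_eq_iff]
  rw [Nat.card_congr e, ← index_stabilizer_of_transitive G x, Subgroup.card_mul_index]

variable (K : Subgroup G) [IsPretransitive K X]

theorem sum_card_fixedBy_mul_eq_card [Fintype K] [Finite X] [Nonempty X] (g : G) :
    ∑ k : K, Nat.card (fixedBy X (g * k)) = Nat.card K := by
  classical
  have := Fintype.ofFinite X
  have hcount : ∀ k : K, Nat.card (fixedBy X (g * k)) =
      ∑ x : X, if k • x = g⁻¹ • x then 1 else 0 := fun k => by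
    rw [← Finset.card_filter, ← Fintype.card_subtype, ← Nat.card_eq_fintype_card]
    exact Nat.card_congr (Equiv.subtypeEquivRight fun x => by
      rw [mem_fixedBy, mul_smul, Subgroup.smul_def, eq_inv_smul_iff])
  have hfiber : ∀ x : X, (∑ k : K, if k • x = g⁻¹ • x then 1 else 0) * Nat.card X = Nat.card K :=
    fun x => by
      rw [← Finset.card_filter, ← Fintype.card_subtype, ← Nat.card_eq_fintype_card]
      exact card_smul_eq_mul_card x _
  refine Nat.eq_of_mul_eq_mul_right (Nat.card_pos (α := X)) ?_
  rw [Finset.sum_congr rfl fun k _ => hcount k, Finset.sum_comm, Finset.sum_mul,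
    Finset.sum_congr rfl fun x _ => hfiber x, Finset.sum_const, Finset.card_univ, smul_eq_mul,
    Nat.card_eq_fintype_card (α := X), mul_comm]

theorem card_fixedBy_eq_one_of_forall_mul [Finite K] [Finite X] {g : G}
    (h : ∀ k ∈ K, (fixedBy X (g * k)).Nonempty) : Nat.card (fixedBy X g) = 1 := by
  have := Fintype.ofFinite K
  have : Nonempty X := (h 1 K.one_mem).to_subtype.map Subtype.val
  have hpos : ∀ k : K, k ∈ Finset.univ → 1 ≤ Nat.card (fixedBy X (g * (k : G))) :=
    fun k _ => Nat.card_pos_iff.2 ⟨(h k k.2).to_subtype, inferInstance⟩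
  have hsum : ∑ _k : K, 1 = ∑ k : K, Nat.card (fixedBy X (g * k)) := by
    rw [sum_card_fixedBy_mul_eq_card, Finset.sum_const, smul_eq_mul, mul_one, Finset.card_univ,
      Nat.card_eq_fintype_card]
  simpa only [OneMemClass.coe_one, mul_one] using
    ((Finset.sum_eq_sum_iff_of_le hpos).1 hsum 1 (Finset.mem_univ _)).symm

end MulAction

open MulAction

theorem derangement_of_kernel_transitive_general
    (hFKS : ∀ (α : Type) (_ : Fintype α) (P : Subgroup (Equiv.Perm α)),
      1 < Fintype.card α → MulAction.IsPretransitive P α →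
        ∃ σ ∈ P, (∀ a : α, σ a ≠ a) ∧ IsPrimePow (orderOf σ))
    (G : Type) [Group G] [Finite G] (Ω₁ Ω₂ : Type) [Fintype Ω₁] [Fintype Ω₂]
    [MulAction G Ω₁] [MulAction G Ω₂]
    [MulAction.IsPretransitive G Ω₁]
    (h₁ : 1 < Fintype.card Ω₁)
    (hprime : ∀ p : ℕ, p.Prime → p ∣ Fintype.card Ω₁ → ¬ p ∣ (Fintype.card Ω₂ - 1))
    (hN₁ : ∀ y y' : Ω₂, ∃ g : G, (∀ x : Ω₁, g • x = x) ∧ g • y = y') :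
    ∃ g : G, (∀ x : Ω₁, g • x ≠ x) ∧ (∀ y : Ω₂, g • y ≠ y) := by
  have hrange : IsPretransitive (toPermHom G Ω₁).range Ω₁ :=
    ⟨fun x x' => let ⟨g, hg⟩ := exists_smul_eq G x x'; ⟨⟨toPerm g, g, rfl⟩, hg⟩⟩
  obtain ⟨_, ⟨g₀, rfl⟩, hg₀, q, b, hq, -, hσ⟩ := hFKS Ω₁ _ _ h₁ hrange
  replace hq := hq.nat_prime
  have := Fact.mk hq
  obtain ⟨g, ⟨c, hg⟩, hfix⟩ :=
    exists_orderOf_eq_prime_pow_fixedBy_eq hq (isOfFinOrder_of_finite g₀) hσ.symm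
  have hg₁ : fixedBy Ω₁ g = ∅ := hfix ▸ Set.eq_empty_of_forall_notMem hg₀
  by_contra! hcon
  let N₁ := fixingSubgroup G (Set.univ : Set Ω₁)
  have : IsPretransitive N₁ Ω₂ :=
    ⟨fun y y' => let ⟨k, hk, hky⟩ := hN₁ y y'
      ⟨⟨k, (mem_fixingSubgroup_iff G).2 fun x _ => hk x⟩, hky⟩⟩
  have hg₂ : Nat.card (fixedBy Ω₂ g) = 1 := by
    refine card_fixedBy_eq_one_of_forall_mul N₁ fun k hk => hcon (g * k) fun x hx => ?_
    rw [mul_smul, (mem_fixingSubgroup_iff G).1 hk x (Set.mem_univ x)] at hx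
    exact hg₁.subset hx
  have h₁q := card_modEq_card_fixedBy (X := Ω₁) hg
  have h₂q := card_modEq_card_fixedBy (X := Ω₂) hg
  rw [hg₁, Nat.card_of_isEmpty (α := (∅ : Set Ω₁)), Nat.card_eq_fintype_card] at h₁q
  rw [hg₂, Nat.card_eq_fintype_card] at h₂q
  exact hprime q hq (Nat.modEq_zero_iff_dvd.1 h₁q)
    (Nat.dvd_of_mod_eq_zero (Nat.sub_mod_eq_zero_of_mod_eq h₂q))

/-- Let `G` act on `Ω = Ω₁ ⊔ Ω₂` with exactly two orbits `Ω₁` and `Ω₂` (i.e. `G` is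
transitive on each of `Ω₁` and `Ω₂`), both of size at least `2`. Suppose that no prime
divisor of `|Ω₁|` divides `|Ω₂| - 1`, and that the kernel `N₁` of the action of `G` on
`Ω₁` acts transitively on `Ω₂`. Then, assuming the Fein–Kantor–Schacher theorem (every
nontrivial finite transitive permutation group has a derangement of prime-power order),
`G` has a derangement on `Ω`. -/
theorem derangement_of_kernel_transitive
    (hFKS : ∀ (α : Type) (_ : Fintype α) (P : Subgroup (Equiv.Perm α)),
      1 < Fintype.card α → MulAction.IsPretransitive P α →
        ∃ σ ∈ P, (∀ a : α, σ a ≠ a) ∧ IsPrimePow (orderOf σ))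
    (G : Type) [Group G] [Finite G] (Ω₁ Ω₂ : Type) [Fintype Ω₁] [Fintype Ω₂]
    [MulAction G Ω₁] [MulAction G Ω₂]
    [MulAction.IsPretransitive G Ω₁] [MulAction.IsPretransitive G Ω₂]
    (h₁ : 1 < Fintype.card Ω₁) (h₂ : 1 < Fintype.card Ω₂)
    (hprime : ∀ p : ℕ, p.Prime → p ∣ Fintype.card Ω₁ → ¬ p ∣ (Fintype.card Ω₂ - 1))
    (hN₁ : ∀ y y' : Ω₂, ∃ g : G, (∀ x : Ω₁, g • x = x) ∧ g • y = y') :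
    ∃ g : G, (∀ x : Ω₁, g • x ≠ x) ∧ (∀ y : Ω₂, g • y ≠ y) :=
  derangement_of_kernel_transitive_general hFKS G Ω₁ Ω₂ h₁ hprime hN₁
end
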